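/- For every integer k ≥ 1, consider the scheduling game with rank-based utilities on two identical machines with jobs 1,…,2k of unit length and one job j* of length 2k, where π₁ = ⟨1, 2, …, k, j*, k+1, …, 2k⟩ and π₂ is the reverse of π₁. This game admits a pure Nash equilibrium, every pure Nash equilibrium s has makespan C_max(s) = 3k, and OPT(G) = 2k; hence the price of anarchy of the Inversed-Policies coordination mechanism on two identical machines is at least 3/2. -/

import Mathlib

open Finset
open scoped Classical

noncomputable section

variable {J M : Type*} [Fintype J]

/-- Completion time of job `j` in profile `s`: the total processing time of the jobs on
`j`'s machine that do not come after `j` in that machine's priority list, divided by the speed. -/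
def Ctime (p : J → ℝ) (r : M → ℝ) (π : M → J → ℕ) (s : J → M) (j : J) : ℝ :=
  (∑ j' ∈ univ.filter (fun j' => s j' = s j ∧ π (s j) j' ≤ π (s j) j), p j') / r (s j)

/-- Rank of job `j` in profile `s`. -/
def rankOf (p : J → ℝ) (r : M → ℝ) (π : M → J → ℕ) (s : J → M) (j : J) : ℝ :=
  ((univ.filter (fun j' => Ctime p r π s j' < Ctime p r π s j)).card : ℝ) +
    (((univ.filter (fun j' => Ctime p r π s j' = Ctime p r π s j)).card : ℝ) + 1) / 2

/-- The unilateral deviation of job `j` to machine `i` is beneficial. -/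
def Beneficial (p : J → ℝ) (r : M → ℝ) (π : M → J → ℕ) (s : J → M) (j : J) (i : M) : Prop :=
  rankOf p r π (Function.update s j i) j < rankOf p r π s j ∨
    (rankOf p r π (Function.update s j i) j = rankOf p r π s j ∧
      Ctime p r π (Function.update s j i) j < Ctime p r π s j)

/-- Pure Nash equilibrium: no job has a beneficial deviation. -/
def IsNE (p : J → ℝ) (r : M → ℝ) (π : M → J → ℕ) (s : J → M) : Prop :=
  ∀ j i, ¬ Beneficial p r π s j i

/-- Makespan of profile `s`. -/
def Cmax (p : J → ℝ) (r : M → ℝ) (π : M → J → ℕ) (s : J → M) : ℝ :=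
  ⨆ j, Ctime p r π s j

/-- Processing times for the Inversed-Policies lower-bound instance:
`2k` unit jobs together with one job `j*` of length `2k`. -/
def pK (k : ℕ) : Fin (2 * k) ⊕ Unit → ℝ := Sum.elim (fun _ => 1) (fun _ => 2 * k)

/-- Priority list of the first machine: `⟨1, …, k, j*, k+1, …, 2k⟩`. -/
def π1K (k : ℕ) : Fin (2 * k) ⊕ Unit → ℕ :=
  Sum.elim (fun i => if (i : ℕ) < k then (i : ℕ) else (i : ℕ) + 1) (fun _ => k)

/-- The Inversed-Policies priority lists: the second machine's list is the reverse
of the first one's. -/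
def πK (k : ℕ) : Fin 2 → (Fin (2 * k) ⊕ Unit) → ℕ :=
  fun i => if i = 0 then π1K k else fun j => 2 * k - π1K k j

namespace IP

variable (k : ℕ)

abbrev JJ := Fin (2*k) ⊕ Unit

abbrev jst : JJ k := Sum.inr ()

lemma fin2cases (m : Fin 2) : m = 0 ∨ m = 1 := by
  fin_cases m
  exacts [Or.inl rfl, Or.inr rfl]

lemma pi0 (j : JJ k) : πK k 0 j = π1K k j := by simp [πK]

lemma pi1 (j : JJ k) : πK k 1 j = 2*k - π1K k j := by
  simp [πK, show (1 : Fin 2) ≠ 0 by decide]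

lemma pi1K_inl (i : Fin (2*k)) :
    π1K k (Sum.inl i) = if (i:ℕ) < k then (i:ℕ) else (i:ℕ)+1 := rfl

lemma pi1K_jst : π1K k (jst k) = k := rfl

lemma pi1K_le (j : JJ k) : π1K k j ≤ 2*k := by
  cases j with
  | inl i => have := i.isLt; rw [pi1K_inl]; split <;> omega
  | inr u => show k ≤ 2*k; omega

lemma pi_jst (m : Fin 2) : πK k m (jst k) = k := by
  rcases fin2cases m with h | h <;> subst h
  · rw [pi0]; rfl
  · rw [pi1]; show 2*k - k = k; omega

lemma pi_inl_le (m : Fin 2) (i : Fin (2*k)) : πK k m (Sum.inl i) ≤ 2*k := by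
  rcases fin2cases m with h | h <;> subst h
  · rw [pi0]; exact pi1K_le k _
  · rw [pi1]; omega

lemma pi_inl_ne (m : Fin 2) (i : Fin (2*k)) : πK k m (Sum.inl i) ≠ k := by
  have h1 := i.isLt
  rcases fin2cases m with h | h <;> subst h
  · rw [pi0, pi1K_inl]; split <;> omega
  · rw [pi1, pi1K_inl]; split <;> omega

lemma pi_inj {m : Fin 2} {i i' : Fin (2*k)}
    (h : πK k m (Sum.inl i) = πK k m (Sum.inl i')) : i = i' := by
  have h1 := i.isLt
  have h2 := i'.isLt
  have : (i : ℕ) = (i' : ℕ) := by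
    rcases fin2cases m with hm | hm <;> subst hm
    · rw [pi0, pi1K_inl, pi0, pi1K_inl] at h; revert h; split <;> split <;> omega
    · rw [pi1, pi1K_inl, pi1, pi1K_inl] at h; revert h; split <;> split <;> omega
  exact Fin.ext this

lemma pi_sum {A B : Fin 2} (hAB : A ≠ B) (i : Fin (2*k)) :
    πK k A (Sum.inl i) + πK k B (Sum.inl i) = 2*k := by
  have h := pi1K_le k (Sum.inl i)
  rcases fin2cases A with hA | hA <;> rcases fin2cases B with hB | hB <;>
    subst hA <;> subst hB <;> first
  | exact absurd rfl hAB
  | (rw [pi0, pi1]; omega)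
  | (rw [pi1, pi0]; omega)

end IP
namespace IP

variable (k : ℕ)

/-- The set of unit jobs counted in `j`'s completion time. -/
def W (s : JJ k → Fin 2) (j : JJ k) : Finset (Fin (2*k)) :=
  univ.filter (fun i => s (Sum.inl i) = s j ∧ πK k (s j) (Sum.inl i) ≤ πK k (s j) j)

/-- Natural-number completion time. -/
def ct (s : JJ k → Fin 2) (j : JJ k) : ℕ :=
  (W k s j).card + (if s (jst k) = s j ∧ k ≤ πK k (s j) j then 2*k else 0)

lemma ctime_eq (s : JJ k → Fin 2) (j : JJ k) :
    Ctime (pK k) (fun _ => (1:ℝ)) (πK k) s j = (ct k s j : ℝ) := by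
  unfold Ctime ct W
  rw [div_one, Finset.sum_filter, Fintype.sum_sum_type]
  simp only [pK, Sum.elim_inl, Sum.elim_inr]
  erw [Finset.sum_boole]
  have h2 : ∑ u : Unit, (if s (Sum.inr u) = s j ∧ πK k (s j) (Sum.inr u) ≤ πK k (s j) j
      then (2 * (k:ℝ)) else 0)
      = (if s (jst k) = s j ∧ k ≤ πK k (s j) j then ((2*k : ℕ) : ℝ) else 0) := by
    rw [Fintype.sum_unique]
    rw [show πK k (s j) (Sum.inr ()) = k from pi_jst k (s j)]
    push_cast
    rfl
  rw [Fintype.sum_unique] at h2 ⊢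
  push_cast at h2 ⊢
  congr 1
  · congr 1; convert rfl
  · convert h2 using 2

lemma ct_ge_one (s : JJ k → Fin 2) (i : Fin (2*k)) : 1 ≤ ct k s (Sum.inl i) := by
  have : i ∈ W k s (Sum.inl i) := by
    simp [W]
  have := Finset.card_pos.mpr ⟨i, this⟩
  unfold ct; omega

lemma ct_jst (s : JJ k → Fin 2) :
    ct k s (jst k) =
      (univ.filter (fun i : Fin (2*k) =>
        s (Sum.inl i) = s (jst k) ∧ πK k (s (jst k)) (Sum.inl i) < k)).card + 2*k := by
  unfold ct
  rw [if_pos ⟨rfl, by rw [pi_jst]⟩]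
  congr 1
  unfold W
  congr 1
  apply Finset.filter_congr
  intro a _
  rw [pi_jst]
  constructor
  · rintro ⟨h1, h2⟩; exact ⟨h1, lt_of_le_of_ne h2 (pi_inl_ne k _ a)⟩
  · rintro ⟨h1, h2⟩; exact ⟨h1, le_of_lt h2⟩

lemma ct_jst_ge (s : JJ k → Fin 2) : 2*k ≤ ct k s (jst k) := by
  rw [ct_jst]; omega

/-- unit job whose priority is below `k` (i.e. scheduled before `j*`'s position),
    or whose machine doesn't hold `j*`: completion time is just the count. -/
lemma ct_unit_lo (s : JJ k → Fin 2) (i : Fin (2*k))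
    (h : πK k (s (Sum.inl i)) (Sum.inl i) < k ∨ s (jst k) ≠ s (Sum.inl i)) :
    ct k s (Sum.inl i) = (W k s (Sum.inl i)).card := by
  unfold ct
  rcases h with h | h
  · rw [if_neg]; · omega
    rintro ⟨-, h2⟩; omega
  · rw [if_neg]; · omega
    rintro ⟨h1, -⟩; exact h h1

lemma ct_unit_hi (s : JJ k → Fin 2) (i : Fin (2*k))
    (h : k < πK k (s (Sum.inl i)) (Sum.inl i)) (h2 : s (jst k) = s (Sum.inl i)) :
    ct k s (Sum.inl i) = (W k s (Sum.inl i)).card + 2*k := by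
  unfold ct
  rw [if_pos ⟨h2, le_of_lt h⟩]

lemma W_card_le (s : JJ k → Fin 2) (j : JJ k) : (W k s j).card ≤ 2*k := by
  have h := Finset.card_le_card (Finset.filter_subset
    (fun i => s (Sum.inl i) = s j ∧ πK k (s j) (Sum.inl i) ≤ πK k (s j) j)
    (univ : Finset (Fin (2*k))))
  simpa [W] using h

end IP
namespace IP

variable {k : ℕ}

lemma card_univ_JJ : (univ : Finset (JJ k)).card = 2*k+1 := by
  simp [Finset.card_univ]

/-- Cardinality of a Fin-interval filter. -/
lemma card_fin_Ico (n a b : ℕ) (hb : b ≤ n) :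
    ((univ : Finset (Fin n)).filter (fun i : Fin n => a ≤ (i:ℕ) ∧ (i:ℕ) < b)).card = b - a := by
  rw [← Nat.card_Ico a b]
  apply Finset.card_bij (fun (i : Fin n) _ => (i : ℕ))
  · intro x hx
    simp only [Finset.mem_filter] at hx
    simp [Finset.mem_Ico]
    omega
  · intro x hx y hy hxy
    exact Fin.ext hxy
  · intro c hc
    simp only [Finset.mem_Ico] at hc
    refine ⟨⟨c, by omega⟩, ?_, rfl⟩
    simp
    omega

section rank

variable (s : JJ k → Fin 2) (j : JJ k)

local notation "C" => Ctime (pK k) (fun _ => (1:ℝ)) (πK k)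
local notation "R" => rankOf (pK k) (fun _ => (1:ℝ)) (πK k)

lemma rank_ge (t : Finset (JJ k)) (ht : ∀ j' ∈ t, C s j' < C s j) :
    (t.card : ℝ) + 1 ≤ R s j := by
  unfold rankOf
  have h1 : t ⊆ univ.filter (fun j' => C s j' < C s j) :=
    fun x hx => Finset.mem_filter.mpr ⟨Finset.mem_univ x, ht x hx⟩
  have h2 : 0 < (univ.filter (fun j' => C s j' = C s j)).card :=
    Finset.card_pos.mpr ⟨j, by simp⟩
  have h3 := Finset.card_le_card h1
  have c1 : (t.card : ℝ) ≤ ((univ.filter (fun j' => C s j' < C s j)).card : ℝ) :=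
    Nat.cast_le.mpr h3
  have c2 : (1 : ℝ) ≤ ((univ.filter (fun j' => C s j' = C s j)).card : ℝ) := by
    exact_mod_cast h2
  linarith

lemma rank_basic :
    Disjoint (univ.filter (fun j' => C s j' < C s j))
      (univ.filter (fun j' => C s j' = C s j)) := by
  rw [Finset.disjoint_left]
  intro a ha hb
  simp only [Finset.mem_filter] at ha hb
  exact absurd hb.2 (ne_of_lt ha.2)

lemma rank_le_half (h : ∃ j', j' ≠ j ∧ C s j ≤ C s j') :
    R s j ≤ 2*(k:ℝ) + 1/2 := by
  obtain ⟨j', hne, hle⟩ := h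
  unfold rankOf
  set S := univ.filter (fun j' => C s j' < C s j) with hS
  set E := univ.filter (fun j' => C s j' = C s j) with hE
  have hdisj : Disjoint S E := rank_basic s j
  have hcard : (S ∪ E).card = S.card + E.card := Finset.card_union_of_disjoint hdisj
  have hjE : j ∈ E := by simp [hE]
  rcases lt_or_eq_of_le hle with hlt | heq
  · -- j' strictly above j : j' not in S nor E
    have hj' : j' ∉ S ∪ E := by
      simp only [Finset.mem_union, hS, hE, Finset.mem_filter]
      rintro (⟨-, h2⟩ | ⟨-, h2⟩) <;> [exact absurd h2 (not_lt_of_gt hlt); exact absurd h2 (ne_of_gt hlt)]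
    have hsub : S ∪ E ⊆ univ.erase j' := by
      intro x hx
      rw [Finset.mem_erase]
      exact ⟨fun hxx => hj' (hxx ▸ hx), Finset.mem_univ x⟩
    have h4 : S.card + E.card ≤ 2*k := by
      have := Finset.card_le_card hsub
      rw [hcard] at this
      rw [Finset.card_erase_of_mem (Finset.mem_univ j'), card_univ_JJ] at this
      omega
    have h5 : 1 ≤ E.card := Finset.card_pos.mpr ⟨j, hjE⟩
    have c4 : (S.card : ℝ) + E.card ≤ 2*k := by exact_mod_cast h4
    have c5 : (1:ℝ) ≤ E.card := by exact_mod_cast h5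
    linarith
  · -- tie with j'
    have hj'E : j' ∈ E := by simp [hE, heq]
    have h5 : 2 ≤ E.card := by
      have : ({j', j} : Finset (JJ k)) ⊆ E := by
        intro x hx
        simp only [Finset.mem_insert, Finset.mem_singleton] at hx
        rcases hx with rfl | rfl <;> assumption
      have := Finset.card_le_card this
      rwa [Finset.card_pair hne] at this
    have h4 : S.card + E.card ≤ 2*k+1 := by
      have := Finset.card_le_card (Finset.subset_univ (S ∪ E))
      rw [hcard, card_univ_JJ] at this
      omega
    have c4 : (S.card : ℝ) + E.card ≤ 2*k+1 := by exact_mod_cast h4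
    have c5 : (2:ℝ) ≤ E.card := by exact_mod_cast h5
    linarith

lemma rank_le_tie (h1 : ∃ j', C s j < C s j') (h2 : ∃ j'', j'' ≠ j ∧ C s j'' = C s j) :
    R s j ≤ 2*(k:ℝ) - 1/2 := by
  obtain ⟨j', hlt⟩ := h1
  obtain ⟨j'', hne'', heq''⟩ := h2
  unfold rankOf
  set S := univ.filter (fun j' => C s j' < C s j) with hS
  set E := univ.filter (fun j' => C s j' = C s j) with hE
  have hdisj : Disjoint S E := rank_basic s j
  have hcard : (S ∪ E).card = S.card + E.card := Finset.card_union_of_disjoint hdisj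
  have hjE : j ∈ E := by simp [hE]
  have hj''E : j'' ∈ E := by simp [hE, heq'']
  have hj' : j' ∉ S ∪ E := by
    simp only [Finset.mem_union, hS, hE, Finset.mem_filter]
    rintro (⟨-, h2⟩ | ⟨-, h2⟩) <;> [exact absurd h2 (not_lt_of_gt hlt); exact absurd h2 (ne_of_gt hlt)]
  have hsub : S ∪ E ⊆ univ.erase j' := by
    intro x hx
    rw [Finset.mem_erase]
    exact ⟨fun hxx => hj' (hxx ▸ hx), Finset.mem_univ x⟩
  have h4 : S.card + E.card ≤ 2*k := by
    have := Finset.card_le_card hsub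
    rw [hcard] at this
    rw [Finset.card_erase_of_mem (Finset.mem_univ j'), card_univ_JJ] at this
    omega
  have h5 : 2 ≤ E.card := by
    have : ({j'', j} : Finset (JJ k)) ⊆ E := by
      intro x hx
      simp only [Finset.mem_insert, Finset.mem_singleton] at hx
      rcases hx with rfl | rfl <;> assumption
    have := Finset.card_le_card this
    rwa [Finset.card_pair hne''] at this
  have c4 : (S.card : ℝ) + E.card ≤ 2*k := by exact_mod_cast h4
  have c5 : (2:ℝ) ≤ E.card := by exact_mod_cast h5
  linarith

lemma rank_top (h : ∀ j', j' ≠ j → C s j' < C s j) :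
    R s j = 2*(k:ℝ) + 1 := by
  unfold rankOf
  have hS : univ.filter (fun j' => C s j' < C s j) = univ.erase j := by
    ext x
    simp only [Finset.mem_filter, Finset.mem_erase, Finset.mem_univ, true_and, and_true]
    constructor
    · intro hx
      rintro rfl
      exact absurd hx (lt_irrefl _)
    · exact h x
  have hE : univ.filter (fun j' => C s j' = C s j) = {j} := by
    ext x
    simp only [Finset.mem_filter, Finset.mem_univ, true_and, Finset.mem_singleton]
    constructor
    · intro hx
      by_contra hne
      exact absurd hx (ne_of_lt (h x hne))
    · rintro rfl; rfl
  rw [hS, hE, Finset.card_erase_of_mem (Finset.mem_univ j), card_univ_JJ]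
  have hcast : (((2*k+1-1 : ℕ)) : ℝ) = 2*(k:ℝ) := by
    push_cast [Nat.add_sub_cancel]
    ring
  rw [Finset.card_singleton, hcast]
  norm_num

end rank

lemma cmax_le (s : JJ k → Fin 2) (v : ℝ)
    (h : ∀ j, Ctime (pK k) (fun _ => (1:ℝ)) (πK k) s j ≤ v) :
    Cmax (pK k) (fun _ => (1:ℝ)) (πK k) s ≤ v := ciSup_le h

lemma le_cmax (s : JJ k → Fin 2) (j : JJ k) :
    Ctime (pK k) (fun _ => (1:ℝ)) (πK k) s j ≤ Cmax (pK k) (fun _ => (1:ℝ)) (πK k) s :=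
  le_ciSup (Set.Finite.bddAbove (Set.finite_range _)) j

def other (m : Fin 2) : Fin 2 := if m = 0 then 1 else 0

lemma other_ne (m : Fin 2) : other m ≠ m := by
  rcases fin2cases m with h | h <;> subst h <;> decide

lemma eq_other_of_ne {m i : Fin 2} (h : i ≠ m) : i = other m := by
  rcases fin2cases m with h1 | h1 <;> rcases fin2cases i with h2 | h2 <;>
    subst h1 <;> subst h2 <;> first | rfl | (exact absurd rfl h) | decide

lemma eq_of_ne_other {m i : Fin 2} (h : i ≠ other m) : i = m := by
  rcases fin2cases m with h1 | h1 <;> rcases fin2cases i with h2 | h2 <;>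
    subst h1 <;> subst h2 <;> first | rfl | (exact absurd rfl h) | (exfalso; exact h (by decide))

lemma exists_count {α : Type*} [DecidableEq α] (f : α → ℕ) :
    ∀ (n : ℕ) (S : Finset α), S.card = n →
      (∀ a ∈ S, ∀ b ∈ S, f a = f b → a = b) →
      ∀ t, 1 ≤ t → t ≤ n → ∃ a ∈ S, (S.filter (fun b => f b ≤ f a)).card = t := by
  intro n
  induction n using Nat.strong_induction_on with
  | _ n ih =>
    intro S hcard hinj t h1 h2
    have hne : S.Nonempty := Finset.card_pos.mp (by omega)
    obtain ⟨a₀, ha₀, hmax⟩ := Finset.exists_max_image S f hne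
    by_cases ht : t = n
    · refine ⟨a₀, ha₀, ?_⟩
      rw [Finset.filter_true_of_mem (fun b hb => hmax b hb), hcard, ht]
    · have hn1 : n - 1 < n := by omega
      obtain ⟨a, ha, hacount⟩ := ih (n-1) hn1 (S.erase a₀)
        (by rw [Finset.card_erase_of_mem ha₀, hcard])
        (fun x hx y hy => hinj x (Finset.mem_of_mem_erase hx) y (Finset.mem_of_mem_erase hy))
        t h1 (by omega)
      refine ⟨a, Finset.mem_of_mem_erase ha, ?_⟩
      rw [← hacount]
      have hane : a ≠ a₀ := (Finset.mem_erase.mp ha).1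
      have hfa : f a < f a₀ :=
        lt_of_le_of_ne (hmax a (Finset.mem_of_mem_erase ha))
          (fun hEq => hane (hinj a (Finset.mem_of_mem_erase ha) a₀ ha₀ hEq))
      congr 1
      ext b
      simp only [Finset.mem_filter, Finset.mem_erase]
      constructor
      · rintro ⟨hbS, hbf⟩
        refine ⟨⟨?_, hbS⟩, hbf⟩
        rintro rfl
        omega
      · rintro ⟨⟨-, hbS⟩, hbf⟩
        exact ⟨hbS, hbf⟩

end IP
namespace IP

variable {k : ℕ}

lemma fin2_ne_iff {A B : Fin 2} (hAB : A ≠ B) (m : Fin 2) : m ≠ A ↔ m = B := by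
  rcases fin2cases A with h1 | h1 <;> rcases fin2cases B with h2 | h2 <;>
    rcases fin2cases m with h3 | h3 <;> subst h1 <;> subst h2 <;> subst h3 <;>
    simp_all <;> first | rfl | (exact absurd rfl hAB) | decide

/-- units assigned to machine `m`. -/
def UM (s : JJ k → Fin 2) (m : Fin 2) : Finset (Fin (2*k)) :=
  univ.filter (fun i => s (Sum.inl i) = m)

lemma UM_compl {A B : Fin 2} (hAB : A ≠ B) (s : JJ k → Fin 2) :
    (UM s A).card + (UM s B).card = 2*k := by
  classical
  have h := Finset.card_filter_add_card_filter_not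
    (s := (univ : Finset (Fin (2*k)))) (p := fun i => s (Sum.inl i) = A)
  rw [Finset.card_univ, Fintype.card_fin] at h
  have h2 : (univ : Finset (Fin (2*k))).filter (fun i => ¬ s (Sum.inl i) = A) =
      (univ : Finset (Fin (2*k))).filter (fun i => s (Sum.inl i) = B) := by
    apply Finset.filter_congr
    intro i _
    simpa using fin2_ne_iff hAB (s (Sum.inl i))
  rw [h2] at h
  exact h

/-- The optimal profile: all unit jobs on machine 1, `j*` on machine 0. -/
def tOPT : JJ k → Fin 2 := Sum.elim (fun _ => 1) (fun _ => 0)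

lemma ct_tOPT_jst : ct k (tOPT (k := k)) (jst k) = 2*k := by
  rw [ct_jst]
  have : (univ.filter (fun i : Fin (2*k) =>
      tOPT (Sum.inl i) = tOPT (k := k) (jst k) ∧
        πK k (tOPT (k := k) (jst k)) (Sum.inl i) < k)) = (∅ : Finset (Fin (2*k))) := by
    apply Finset.filter_false_of_mem
    intro i _
    rintro ⟨h1, -⟩
    exact absurd h1 (by simp [tOPT])
  rw [this]
  simp

lemma parts34 (hk : 1 ≤ k) :
    (∃ t : Fin (2 * k) ⊕ Unit → Fin 2,
      Cmax (pK k) (fun _ => (1:ℝ)) (πK k) t = 2 * (k : ℝ)) ∧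
    (∀ t : Fin (2 * k) ⊕ Unit → Fin 2,
      2 * (k : ℝ) ≤ Cmax (pK k) (fun _ => (1:ℝ)) (πK k) t) := by
  constructor
  · refine ⟨tOPT, le_antisymm (cmax_le _ _ ?_) ?_⟩
    · intro j
      rw [ctime_eq]
      have h : ct k (tOPT (k := k)) j ≤ 2*k := by
        cases j with
        | inl i =>
          rw [ct_unit_lo k _ i (Or.inr (by simp [tOPT]))]
          exact W_card_le k _ _
        | inr u =>
          rw [show (Sum.inr u : JJ k) = jst k from rfl, ct_tOPT_jst]
      calc ((ct k (tOPT (k := k)) j : ℝ)) ≤ ((2*k : ℕ) : ℝ) := Nat.cast_le.mpr h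
        _ = 2*(k:ℝ) := by push_cast; ring
    · have h := le_cmax (tOPT (k := k)) (jst k)
      rw [ctime_eq, ct_tOPT_jst] at h
      calc (2*(k:ℝ)) = ((2*k : ℕ) : ℝ) := by push_cast; ring
        _ ≤ _ := h
  · intro t
    have h := le_cmax t (jst k)
    rw [ctime_eq] at h
    have h2 := ct_jst_ge k t
    calc (2*(k:ℝ)) = ((2*k : ℕ) : ℝ) := by push_cast; ring
      _ ≤ ((ct k t (jst k) : ℝ)) := Nat.cast_le.mpr h2
      _ ≤ _ := h

end IP
namespace IP

variable {k : ℕ}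

local notation "C" => Ctime (pK k) (fun _ => (1:ℝ)) (πK k)
local notation "R" => rankOf (pK k) (fun _ => (1:ℝ)) (πK k)

lemma updc (inst1 inst2 : DecidableEq (JJ k)) (f : JJ k → Fin 2) (j : JJ k) (v : Fin 2) :
    @Function.update _ _ inst1 f j v = @Function.update _ _ inst2 f j v := by
  have : inst1 = inst2 := Subsingleton.elim inst1 inst2
  rw [this]

lemma UM_le_k (s : JJ k → Fin 2) (m : Fin 2)
    (h : ∀ i ∈ UM s m, πK k m (Sum.inl i) < k) : (UM s m).card ≤ k := by
  have h2 : (UM s m).card ≤ (Finset.range k).card :=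
    Finset.card_le_card_of_injOn (fun i => πK k m (Sum.inl i))
      (fun i hi => Finset.mem_range.mpr (h i hi))
      (fun i _ i' _ hEq => pi_inj k hEq)
  simpa using h2

/-- In a NE, every unit job sharing `j*`'s machine is scheduled before `j*`. -/
lemma NE_before (s : JJ k → Fin 2) (hs : IsNE (pK k) (fun _ => (1:ℝ)) (πK k) s) :
    ∀ i : Fin (2*k), s (Sum.inl i) = s (jst k) → πK k (s (jst k)) (Sum.inl i) < k := by
  by_contra hcon
  push_neg at hcon
  obtain ⟨iw, hiwA, hiwπ⟩ := hcon
  set A := s (jst k) with hA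
  have hiwπ' : k < πK k A (Sum.inl iw) :=
    lt_of_le_of_ne hiwπ (Ne.symm (pi_inl_ne k A iw))
  set T := univ.filter (fun i : Fin (2*k) => s (Sum.inl i) = A ∧ k < πK k A (Sum.inl i)) with hT
  have hTne : T.Nonempty := ⟨iw, by simp [hT, hiwA, hiwπ']⟩
  obtain ⟨i₀, hi₀T, hmax⟩ := T.exists_max_image (fun i => πK k A (Sum.inl i)) hTne
  rw [hT, Finset.mem_filter] at hi₀T
  obtain ⟨-, hi₀A, hi₀π⟩ := hi₀T
  -- every unit on A has priority at most that of i₀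
  have claim_le : ∀ i' ∈ UM s A, πK k A (Sum.inl i') ≤ πK k A (Sum.inl i₀) := by
    intro i' hi'
    rw [UM, Finset.mem_filter] at hi'
    by_cases hcase : k < πK k A (Sum.inl i')
    · exact hmax i' (by simp [hT, hi'.2, hcase])
    · push_neg at hcase
      have := pi_inl_ne k A i'
      omega
  have claimW : W k s (Sum.inl i₀) = UM s A := by
    ext x
    simp only [W, UM, Finset.mem_filter, Finset.mem_univ, true_and, hi₀A]
    constructor
    · rintro ⟨h1, -⟩; exact h1
    · intro h1
      exact ⟨h1, claim_le x (by simp [UM, h1])⟩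
  have hcti₀ : ct k s (Sum.inl i₀) = (UM s A).card + 2*k := by
    rw [ct_unit_hi k s i₀ (by rw [hi₀A]; exact hi₀π) (by rw [hi₀A, ← hA]), claimW]
  have hUA1 : 1 ≤ (UM s A).card := Finset.card_pos.mpr ⟨i₀, by simp [UM, hi₀A]⟩
  -- all other jobs complete strictly earlier
  have hother : ∀ j' : JJ k, j' ≠ Sum.inl i₀ → ct k s j' < (UM s A).card + 2*k := by
    intro j' hne
    cases j' with
    | inr u =>
      have : (Sum.inr u : JJ k) = jst k := rfl
      rw [this, ct_jst]
      have hsub : (univ.filter (fun i : Fin (2*k) =>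
          s (Sum.inl i) = s (jst k) ∧ πK k (s (jst k)) (Sum.inl i) < k)) ⊆
          (UM s A).erase i₀ := by
        intro x hx
        rw [Finset.mem_filter] at hx
        rw [Finset.mem_erase]
        refine ⟨?_, by simp [UM, hx.2.1, hA]⟩
        rintro rfl
        rw [← hA] at hx
        omega
      have := Finset.card_le_card hsub
      rw [Finset.card_erase_of_mem (by simp [UM, hi₀A])] at this
      omega
    | inl i' =>
      have hii : i' ≠ i₀ := fun hEq => hne (by rw [hEq])
      by_cases hcase : s (Sum.inl i') = A
      · -- same machine as j*
        have hi₀notW : i₀ ∉ W k s (Sum.inl i') := by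
          rw [W, Finset.mem_filter, hcase]
          rintro ⟨-, -, h3⟩
          have h4 := claim_le i' (by simp [UM, hcase])
          have h5 : πK k A (Sum.inl i₀) = πK k A (Sum.inl i') := le_antisymm h3 h4
          exact hii (pi_inj k h5.symm)
        have hsub : W k s (Sum.inl i') ⊆ (UM s A).erase i₀ := by
          intro x hx
          rw [Finset.mem_erase]
          refine ⟨fun hEq => hi₀notW (hEq ▸ hx), ?_⟩
          rw [W, Finset.mem_filter, hcase] at hx
          simp [UM, hx.2.1]
        have hWle := Finset.card_le_card hsub
        rw [Finset.card_erase_of_mem (by simp [UM, hi₀A])] at hWle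
        have : ct k s (Sum.inl i') ≤ (W k s (Sum.inl i')).card + 2*k := by
          unfold ct
          split <;> omega
        omega
      · -- other machine
        have hB : s (Sum.inl i') = other A := eq_other_of_ne hcase
        have hcompl := UM_compl (k := k) (Ne.symm (other_ne A)) s
        have hct : ct k s (Sum.inl i') = (W k s (Sum.inl i')).card :=
          ct_unit_lo k s i' (Or.inr (by rw [← hA, hB]; exact Ne.symm (other_ne A)))
        have hsub : W k s (Sum.inl i') ⊆ UM s (other A) := by
          intro x hx
          rw [W, Finset.mem_filter, hB] at hx
          simp [UM, hx.2.1]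
        have := Finset.card_le_card hsub
        omega
  -- old rank is maximal
  have hrank_old : 2*(k:ℝ) + 1 ≤ R s (Sum.inl i₀) := by
    have h := rank_ge s (Sum.inl i₀) (univ.erase (Sum.inl i₀)) ?_
    · rw [Finset.card_erase_of_mem (Finset.mem_univ _), card_univ_JJ] at h
      calc (2*(k:ℝ) + 1) = ((2*k+1-1 : ℕ) : ℝ) + 1 := by push_cast; ring
        _ ≤ _ := h
    · intro j' hj'
      rw [Finset.mem_erase] at hj'
      rw [ctime_eq, ctime_eq, hcti₀]
      exact_mod_cast hother j' hj'.1
  -- deviation of i₀ to the other machine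
  set B := other A with hB
  set s' := Function.update s (Sum.inl i₀) B with hs'
  have hs'jst : s' (jst k) = A := by
    rw [hs', Function.update_of_ne (by simp [jst]) _ _, hA]
  have hs'i₀ : s' (Sum.inl i₀) = B := by rw [hs', Function.update_self]
  have hct' : ct k s' (Sum.inl i₀) = (W k s' (Sum.inl i₀)).card := by
    apply ct_unit_lo
    right
    rw [hs'jst, hs'i₀]
    exact Ne.symm (other_ne A)
  have hrank_new : R s' (Sum.inl i₀) ≤ 2*(k:ℝ) + 1/2 := by
    apply rank_le_half
    refine ⟨jst k, by simp [jst], ?_⟩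
    rw [ctime_eq, ctime_eq]
    have h1 : ct k s' (Sum.inl i₀) ≤ 2*k := by rw [hct']; exact W_card_le k _ _
    have h2 : 2*k ≤ ct k s' (jst k) := ct_jst_ge k s'
    exact_mod_cast le_trans h1 h2
  have key : ∀ (inst : DecidableEq (JJ k)),
      @Function.update _ _ inst s (Sum.inl i₀) B = s' :=
    fun inst => (updc inst _ s (Sum.inl i₀) B).trans hs'.symm
  refine hs (Sum.inl i₀) B (Or.inl ?_)
  rw [key]
  linarith

/-- In a NE, exactly `k` unit jobs share `j*`'s machine. -/
lemma NE_count (hk : 1 ≤ k) (s : JJ k → Fin 2)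
    (hs : IsNE (pK k) (fun _ => (1:ℝ)) (πK k) s) :
    (UM s (s (jst k))).card = k := by
  have hbefore := NE_before s hs
  set A := s (jst k) with hA
  have hUAle : (UM s A).card ≤ k :=
    UM_le_k s A (fun i hi => hbefore i (by rw [UM, Finset.mem_filter] at hi; exact hi.2))
  by_contra hne
  have hUAlt : (UM s A).card < k := lt_of_le_of_ne hUAle hne
  set B := other A with hB
  have hBA : B ≠ A := other_ne A
  have hcompl : (UM s A).card + (UM s B).card = 2*k := UM_compl (Ne.symm hBA) s
  have hUBge : k+1 ≤ (UM s B).card := by omega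
  -- find a unit on B with priority above k
  have hUBlow : ((UM s B).filter (fun i => πK k B (Sum.inl i) < k)).card ≤ k := by
    have := Finset.card_le_card_of_injOn (fun i => πK k B (Sum.inl i))
      (s := (UM s B).filter (fun i => πK k B (Sum.inl i) < k)) (t := Finset.range k)
      (fun i hi => Finset.mem_range.mpr (Finset.mem_filter.mp hi).2)
      (fun i _ i' _ hEq => pi_inj k hEq)
    simpa using this
  obtain ⟨i₁, hi₁UB, hi₁n⟩ := Finset.not_subset.mp
    (fun hsub : UM s B ⊆ (UM s B).filter (fun i => πK k B (Sum.inl i) < k) => by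
      have := Finset.card_le_card hsub; omega)
  have hi₁π : k < πK k B (Sum.inl i₁) := by
    have h1 : ¬ (πK k B (Sum.inl i₁) < k) := fun hc => hi₁n (Finset.mem_filter.mpr ⟨hi₁UB, hc⟩)
    have := pi_inl_ne k B i₁
    omega
  -- the unit on B with maximal priority
  obtain ⟨ℓ, hℓUB, hmax⟩ := (UM s B).exists_max_image (fun i => πK k B (Sum.inl i)) ⟨i₁, hi₁UB⟩
  have hℓB : s (Sum.inl ℓ) = B := (Finset.mem_filter.mp hℓUB).2
  have hπBℓ : k < πK k B (Sum.inl ℓ) := lt_of_lt_of_le hi₁π (hmax i₁ hi₁UB)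
  have claimW : W k s (Sum.inl ℓ) = UM s B := by
    ext x
    simp only [W, UM, Finset.mem_filter, Finset.mem_univ, true_and, hℓB]
    constructor
    · rintro ⟨h1, -⟩; exact h1
    · intro h1
      exact ⟨h1, hmax x (by simp [UM, h1])⟩
  have hctℓ : ct k s (Sum.inl ℓ) = (UM s B).card := by
    rw [ct_unit_lo k s ℓ (Or.inr (by rw [← hA, hℓB]; exact Ne.symm hBA)), claimW]
  -- all other unit jobs complete strictly earlier
  have hother : ∀ i' : Fin (2*k), i' ≠ ℓ → ct k s (Sum.inl i') < (UM s B).card := by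
    intro i' hii
    by_cases hcase : s (Sum.inl i') = B
    · have hℓnotW : ℓ ∉ W k s (Sum.inl i') := by
        rw [W, Finset.mem_filter, hcase]
        rintro ⟨-, -, h3⟩
        have h4 := hmax i' (by simp [UM, hcase])
        exact hii (pi_inj k (le_antisymm h4 h3))
      have hsub : W k s (Sum.inl i') ⊆ (UM s B).erase ℓ := by
        intro x hx
        rw [Finset.mem_erase]
        refine ⟨fun hEq => hℓnotW (hEq ▸ hx), ?_⟩
        rw [W, Finset.mem_filter, hcase] at hx
        simp [UM, hx.2.1]
      have hWle := Finset.card_le_card hsub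
      rw [Finset.card_erase_of_mem hℓUB] at hWle
      have hct : ct k s (Sum.inl i') = (W k s (Sum.inl i')).card :=
        ct_unit_lo k s i' (Or.inr (by rw [← hA, hcase]; exact Ne.symm hBA))
      have hUB1 : 1 ≤ (UM s B).card := Finset.card_pos.mpr ⟨ℓ, hℓUB⟩
      omega
    · have hcA : s (Sum.inl i') = A := (fin2_ne_iff hBA _).mp hcase
      have hπ : πK k A (Sum.inl i') < k := by
        rw [hA] at hcA ⊢
        exact hbefore i' hcA
      have hct : ct k s (Sum.inl i') = (W k s (Sum.inl i')).card :=
        ct_unit_lo k s i' (Or.inl (by rw [hcA]; exact hπ))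
      have hsub : W k s (Sum.inl i') ⊆ UM s A := by
        intro x hx
        rw [W, Finset.mem_filter, hcA] at hx
        simp [UM, hx.2.1]
      have := Finset.card_le_card hsub
      omega
  -- old rank at least 2k
  have hrank_old : 2*(k:ℝ) ≤ R s (Sum.inl ℓ) := by
    have h := rank_ge s (Sum.inl ℓ) (Finset.image Sum.inl (univ.erase ℓ)) ?_
    · rw [Finset.card_image_of_injective _ Sum.inl_injective,
        Finset.card_erase_of_mem (Finset.mem_univ _), Finset.card_univ, Fintype.card_fin] at h
      have : ((2*k-1 : ℕ) : ℝ) + 1 = 2*(k:ℝ) := by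
        have h2k : 1 ≤ 2*k := by omega
        push_cast [Nat.cast_sub h2k]
        ring
      linarith
    · intro j' hj'
      rw [Finset.mem_image] at hj'
      obtain ⟨i', hi', rfl⟩ := hj'
      rw [Finset.mem_erase] at hi'
      rw [ctime_eq, ctime_eq, hctℓ]
      exact_mod_cast hother i' hi'.1
  -- deviation of ℓ to machine A
  set s' := Function.update s (Sum.inl ℓ) A with hs'
  have hs'jst : s' (jst k) = A := by
    rw [hs', Function.update_of_ne (by simp [jst]) _ _, hA]
  have hs'ℓ : s' (Sum.inl ℓ) = A := by rw [hs', Function.update_self]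
  have hπAℓ : πK k A (Sum.inl ℓ) < k := by
    have := pi_sum (k := k) (Ne.symm hBA) ℓ
    omega
  have hct'ℓ : ct k s' (Sum.inl ℓ) = (W k s' (Sum.inl ℓ)).card :=
    ct_unit_lo k s' ℓ (Or.inl (by rw [hs'ℓ]; exact hπAℓ))
  set t₀ := (W k s' (Sum.inl ℓ)).card with ht₀
  have ht₀1 : 1 ≤ t₀ := by
    rw [ht₀]
    exact Finset.card_pos.mpr ⟨ℓ, by simp [W]⟩
  have ht₀le : t₀ ≤ k := by
    have hsub : W k s' (Sum.inl ℓ) ⊆ insert ℓ (UM s A) := by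
      intro x hx
      rw [W, Finset.mem_filter, hs'ℓ] at hx
      rcases eq_or_ne x ℓ with rfl | hxℓ
      · exact Finset.mem_insert_self _ _
      · apply Finset.mem_insert_of_mem
        have : s (Sum.inl x) = A := by
          rw [← hx.2.1, hs', Function.update_of_ne (by simp [hxℓ]) _ _]
        simp [UM, this]
    have := Finset.card_le_card hsub
    have := Finset.card_insert_le ℓ (UM s A)
    omega
  -- tie partner on machine B
  have hUB'card : ((UM s B).erase ℓ).card = (UM s B).card - 1 :=
    Finset.card_erase_of_mem hℓUB
  obtain ⟨i₂, hi₂, hcount⟩ := exists_count (fun i => πK k B (Sum.inl i))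
    (((UM s B).erase ℓ).card) ((UM s B).erase ℓ) rfl
    (fun x _ y _ hEq => pi_inj k hEq) t₀ ht₀1 (by omega)
  have hi₂ℓ : i₂ ≠ ℓ := (Finset.mem_erase.mp hi₂).1
  have hi₂B : s (Sum.inl i₂) = B := (Finset.mem_filter.mp (Finset.mem_of_mem_erase hi₂)).2
  have hs'i₂ : s' (Sum.inl i₂) = B := by
    rw [hs', Function.update_of_ne (by simp [hi₂ℓ]) _ _, hi₂B]
  have hct'i₂ : ct k s' (Sum.inl i₂) = t₀ := by
    rw [ct_unit_lo k s' i₂ (Or.inr (by rw [hs'jst, hs'i₂]; exact Ne.symm hBA))]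
    rw [← hcount]
    congr 1
    ext x
    simp only [W, Finset.mem_filter, Finset.mem_univ, true_and, Finset.mem_erase, hs'i₂]
    constructor
    · rintro ⟨h1, h2⟩
      have hxℓ : x ≠ ℓ := by
        rintro rfl
        rw [hs'ℓ] at h1
        exact hBA h1.symm
      have hxB : s (Sum.inl x) = B := by
        rw [← h1, hs', Function.update_of_ne (by simp [hxℓ]) _ _]
      exact ⟨⟨hxℓ, by simp [UM, hxB]⟩, h2⟩
    · rintro ⟨⟨hxℓ, hxUB⟩, h2⟩
      have hxB : s (Sum.inl x) = B := (Finset.mem_filter.mp hxUB).2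
      refine ⟨?_, h2⟩
      rw [hs', Function.update_of_ne (by simp [hxℓ]) _ _, hxB]
  -- new rank at most 2k - 1/2
  have hrank_new : R s' (Sum.inl ℓ) ≤ 2*(k:ℝ) - 1/2 := by
    apply rank_le_tie
    · refine ⟨jst k, ?_⟩
      rw [ctime_eq, ctime_eq]
      have h1 : ct k s' (Sum.inl ℓ) < ct k s' (jst k) := by
        have := ct_jst_ge k s'
        rw [hct'ℓ]
        omega
      exact_mod_cast h1
    · refine ⟨Sum.inl i₂, by simp [Fin.ext_iff] at *; omega, ?_⟩
      rw [ctime_eq, ctime_eq, hct'i₂, hct'ℓ]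
  have key : ∀ (inst : DecidableEq (JJ k)),
      @Function.update _ _ inst s (Sum.inl ℓ) A = s' :=
    fun inst => (updc inst _ s (Sum.inl ℓ) A).trans hs'.symm
  refine hs (Sum.inl ℓ) A (Or.inl ?_)
  rw [key]
  linarith

/-- Every NE has makespan `3k`. -/
lemma NE_makespan (hk : 1 ≤ k) (s : JJ k → Fin 2)
    (hs : IsNE (pK k) (fun _ => (1:ℝ)) (πK k) s) :
    Cmax (pK k) (fun _ => (1:ℝ)) (πK k) s = 3 * (k : ℝ) := by
  have hbefore := NE_before s hs
  have hcount := NE_count hk s hs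
  set A := s (jst k) with hA
  have hctjst : ct k s (jst k) = 3*k := by
    rw [ct_jst]
    have : (univ.filter (fun i : Fin (2*k) =>
        s (Sum.inl i) = s (jst k) ∧ πK k (s (jst k)) (Sum.inl i) < k)) = UM s A := by
      ext x
      simp only [UM, Finset.mem_filter, Finset.mem_univ, true_and, ← hA]
      constructor
      · rintro ⟨h1, -⟩; exact h1
      · intro h1; exact ⟨h1, hbefore x h1⟩
    rw [this, hcount]
    omega
  have hub : ∀ j, ct k s j ≤ 3*k := by
    intro j
    cases j with
    | inr u => rw [show (Sum.inr u : JJ k) = jst k from rfl, hctjst]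
    | inl i =>
      by_cases hcase : s (Sum.inl i) = A
      · have hπ : πK k (s (Sum.inl i)) (Sum.inl i) < k := by
          rw [hcase]; exact hbefore i hcase
        rw [ct_unit_lo k s i (Or.inl hπ)]
        have hsub : W k s (Sum.inl i) ⊆ UM s A := by
          intro x hx
          rw [W, Finset.mem_filter, hcase] at hx
          simp [UM, hx.2.1]
        have := Finset.card_le_card hsub
        omega
      · rw [ct_unit_lo k s i (Or.inr (fun hEq => hcase (by rw [← hEq, ← hA])))]
        have := W_card_le k s (Sum.inl i)
        omega
  apply le_antisymm
  · apply cmax_le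
    intro j
    rw [ctime_eq]
    calc ((ct k s j : ℝ)) ≤ ((3*k : ℕ) : ℝ) := Nat.cast_le.mpr (hub j)
      _ = 3*(k:ℝ) := by push_cast; ring
  · have h := le_cmax s (jst k)
    rw [ctime_eq, hctjst] at h
    calc (3*(k:ℝ)) = ((3*k : ℕ) : ℝ) := by push_cast; ring
      _ ≤ _ := h

end IP
namespace IP

variable {k : ℕ}

local notation "C" => Ctime (pK k) (fun _ => (1:ℝ)) (πK k)
local notation "R" => rankOf (pK k) (fun _ => (1:ℝ)) (πK k)

/-- The equilibrium profile: units `0..k-1` and `j*` on machine 0, units `k..2k-1` on machine 1. -/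
def s0 : JJ k → Fin 2 := Sum.elim (fun i => if (i:ℕ) < k then 0 else 1) (fun _ => 0)

lemma s0_inl (x : Fin (2*k)) : s0 (Sum.inl x) = if (x:ℕ) < k then 0 else 1 := rfl
lemma s0_jst : s0 (k := k) (jst k) = 0 := rfl

lemma card_Lset : ((univ : Finset (Fin (2*k))).filter (fun i : Fin (2*k) => (i:ℕ) < k)).card = k := by
  have h : ((univ : Finset (Fin (2*k))).filter (fun i : Fin (2*k) => (i:ℕ) < k)) =
      ((univ : Finset (Fin (2*k))).filter (fun i : Fin (2*k) => 0 ≤ (i:ℕ) ∧ (i:ℕ) < k)) := by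
    apply Finset.filter_congr; intro i _; simp
  rw [h, card_fin_Ico (2*k) 0 k (by omega)]
  omega

lemma card_Hset : ((univ : Finset (Fin (2*k))).filter (fun i : Fin (2*k) => k ≤ (i:ℕ))).card = k := by
  have h : ((univ : Finset (Fin (2*k))).filter (fun i : Fin (2*k) => k ≤ (i:ℕ))) =
      ((univ : Finset (Fin (2*k))).filter (fun i : Fin (2*k) => k ≤ (i:ℕ) ∧ (i:ℕ) < 2*k)) := by
    apply Finset.filter_congr; intro i _; simp [i.isLt]
  rw [h, card_fin_Ico (2*k) k (2*k) (by omega)]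
  omega

lemma card_pi_lt (m : Fin 2) :
    ((univ : Finset (Fin (2*k))).filter (fun i => πK k m (Sum.inl i) < k)).card ≤ k := by
  have h2 : ((univ : Finset (Fin (2*k))).filter (fun i => πK k m (Sum.inl i) < k)).card
      ≤ (Finset.range k).card :=
    Finset.card_le_card_of_injOn (fun i => πK k m (Sum.inl i))
      (fun i hi => Finset.mem_range.mpr (Finset.mem_filter.mp hi).2)
      (fun i _ i' _ hEq => pi_inj k hEq)
  simpa using h2

/-- s0-completion time of a low unit. -/
lemma ct_s0_L (ℓ : Fin (2*k)) (hℓ : (ℓ:ℕ) < k) : ct k s0 (Sum.inl ℓ) = (ℓ:ℕ) + 1 := by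
  have hm : s0 (Sum.inl ℓ) = 0 := by rw [s0_inl, if_pos hℓ]
  have hπ : πK k (s0 (Sum.inl ℓ)) (Sum.inl ℓ) < k := by
    rw [hm, pi0, pi1K_inl, if_pos hℓ]; exact hℓ
  rw [ct_unit_lo k s0 ℓ (Or.inl hπ)]
  have hW : W k s0 (Sum.inl ℓ) =
      (univ : Finset (Fin (2*k))).filter (fun x : Fin (2*k) => 0 ≤ (x:ℕ) ∧ (x:ℕ) < (ℓ:ℕ)+1) := by
    ext x
    simp only [W, Finset.mem_filter, Finset.mem_univ, true_and, hm, pi0, pi1K_inl, s0_inl,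
      if_pos hℓ]
    constructor
    · rintro ⟨h1, h2⟩
      have hx : (x:ℕ) < k := by
        by_contra hxk
        rw [if_neg hxk] at h1
        exact absurd h1 (by decide)
      rw [if_pos hx] at h2
      omega
    · rintro ⟨-, h2⟩
      have hx : (x:ℕ) < k := by omega
      rw [if_pos hx, if_pos hx]
      exact ⟨rfl, by omega⟩
  rw [hW, card_fin_Ico (2*k) 0 ((ℓ:ℕ)+1) (by omega)]
  omega

/-- s0-completion time of a high unit. -/
lemma ct_s0_H (h : Fin (2*k)) (hh : k ≤ (h:ℕ)) : ct k s0 (Sum.inl h) = 2*k - (h:ℕ) := by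
  have hm : s0 (Sum.inl h) = 1 := by rw [s0_inl, if_neg (by omega)]
  rw [ct_unit_lo k s0 h (Or.inr (by rw [hm, s0_jst]; decide))]
  have hW : W k s0 (Sum.inl h) =
      (univ : Finset (Fin (2*k))).filter (fun x : Fin (2*k) => (h:ℕ) ≤ (x:ℕ) ∧ (x:ℕ) < 2*k) := by
    ext x
    have hxlt := x.isLt
    have hhlt := h.isLt
    simp only [W, Finset.mem_filter, Finset.mem_univ, true_and, hm, pi1, pi1K_inl, s0_inl,
      if_neg (show ¬ ((h:ℕ) < k) by omega)]
    constructor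
    · rintro ⟨h1, h2⟩
      have hx : ¬ ((x:ℕ) < k) := by
        by_contra hxk
        rw [if_pos (by omega)] at h1
        exact absurd h1 (by decide)
      rw [if_neg hx] at h2
      omega
    · rintro ⟨h2, -⟩
      have hx : ¬ ((x:ℕ) < k) := by omega
      rw [if_neg hx, if_neg hx]
      exact ⟨rfl, by omega⟩
  rw [hW, card_fin_Ico (2*k) (h:ℕ) (2*k) (by omega)]

lemma ct_s0_jst : ct k s0 (jst k) = 3*k := by
  rw [ct_jst]
  have hset : (univ.filter (fun i : Fin (2*k) =>
      s0 (Sum.inl i) = s0 (k := k) (jst k) ∧ πK k (s0 (k := k) (jst k)) (Sum.inl i) < k)) =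
      ((univ : Finset (Fin (2*k))).filter (fun i : Fin (2*k) => (i:ℕ) < k)) := by
    apply Finset.filter_congr
    intro x _
    rw [s0_jst, pi0, pi1K_inl, s0_inl]
    constructor
    · rintro ⟨h1, -⟩
      by_contra hxk
      rw [if_neg hxk] at h1
      exact absurd h1 (by decide)
    · intro hx
      rw [if_pos hx, if_pos hx]
      exact ⟨rfl, hx⟩
  rw [hset, card_Lset]
  omega

lemma ct_s0_unit_le (x : Fin (2*k)) : ct k s0 (Sum.inl x) ≤ k := by
  have hxlt := x.isLt
  by_cases hx : (x:ℕ) < k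
  · rw [ct_s0_L x hx]; omega
  · rw [ct_s0_H x (by omega)]; omega

lemma rank_s0_jst (hk : 1 ≤ k) : R s0 (jst k) = 2*(k:ℝ) + 1 := by
  apply rank_top
  intro j' hj'
  rw [ctime_eq, ctime_eq, ct_s0_jst]
  cases j' with
  | inr u => exact absurd rfl hj'
  | inl x =>
    have := ct_s0_unit_le (k := k) x
    exact_mod_cast by omega

lemma rank_s0_unit (hk : 1 ≤ k) (x : Fin (2*k)) : R s0 (Sum.inl x) ≤ 2*(k:ℝ) - 1/2 := by
  have hxlt := x.isLt
  apply rank_le_tie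
  · refine ⟨jst k, ?_⟩
    rw [ctime_eq, ctime_eq, ct_s0_jst]
    have := ct_s0_unit_le (k := k) x
    exact_mod_cast by omega
  · -- the mirror unit has the same completion time
    refine ⟨Sum.inl (⟨2*k-1-(x:ℕ), by omega⟩ : Fin (2*k)), ?_, ?_⟩
    · intro hEq
      have := Sum.inl_injective hEq
      have : 2*k-1-(x:ℕ) = (x:ℕ) := by exact_mod_cast congrArg Fin.val this
      omega
    · rw [ctime_eq, ctime_eq]
      by_cases hx : (x:ℕ) < k
      · rw [ct_s0_L x hx, ct_s0_H (⟨2*k-1-(x:ℕ), by omega⟩ : Fin (2*k)) (by simp; omega)]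
        have : 2*k - (((⟨2*k-1-(x:ℕ), by omega⟩ : Fin (2*k)):ℕ)) = (x:ℕ) + 1 := by simp; omega
        rw [this]
      · rw [ct_s0_H x (by omega), ct_s0_L (⟨2*k-1-(x:ℕ), by omega⟩ : Fin (2*k)) (by simp; omega)]
        have : (((⟨2*k-1-(x:ℕ), by omega⟩ : Fin (2*k)):ℕ)) + 1 = 2*k - (x:ℕ) := by simp; omega
        rw [this]

lemma s0_NE (hk : 1 ≤ k) : IsNE (pK k) (fun _ => (1:ℝ)) (πK k) s0 := by
  intro j i hB
  by_cases hij : i = s0 j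
  · -- staying put is never beneficial
    subst hij
    have key : ∀ inst : DecidableEq (JJ k), @Function.update _ _ inst s0 j (s0 j) = s0 :=
      fun inst => @Function.update_eq_self _ _ inst j s0
    rcases hB with h | ⟨-, h⟩
    · rw [key] at h; exact absurd h (lt_irrefl _)
    · rw [key] at h; exact absurd h (lt_irrefl _)
  · have hi : i = other (s0 j) := eq_other_of_ne hij
    cases j with
    | inr u =>
      -- j* deviates to machine 1
      have hi1 : i = 1 := by rw [hi]; rfl
      subst hi1
      set s3 := Function.update s0 (jst k) (1 : Fin 2) with hs3
      have key : ∀ inst : DecidableEq (JJ k),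
          @Function.update _ _ inst s0 (Sum.inr u) (1 : Fin 2) = s3 :=
        fun inst => (updc inst _ s0 (jst k) 1).trans hs3.symm
      have hs3u : ∀ x : Fin (2*k), s3 (Sum.inl x) = s0 (Sum.inl x) :=
        fun x => Function.update_of_ne (by simp [jst]) _ _
      have hs3j : s3 (jst k) = 1 := Function.update_self _ _ _
      -- completion time of j* after deviation is still 3k
      have hct3jst : ct k s3 (jst k) = 3*k := by
        rw [ct_jst]
        have hset : (univ.filter (fun x : Fin (2*k) =>
            s3 (Sum.inl x) = s3 (jst k) ∧ πK k (s3 (jst k)) (Sum.inl x) < k)) =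
            ((univ : Finset (Fin (2*k))).filter (fun x : Fin (2*k) => k ≤ (x:ℕ))) := by
          apply Finset.filter_congr
          intro x _
          have hxlt := x.isLt
          rw [hs3j, hs3u, pi1, pi1K_inl, s0_inl]
          constructor
          · rintro ⟨h1, -⟩
            by_contra hxk
            push_neg at hxk
            rw [if_pos (by omega)] at h1
            exact absurd h1 (by decide)
          · intro hx
            rw [if_neg (by omega), if_neg (by omega)]
            exact ⟨rfl, by omega⟩
        rw [hset, card_Hset]
        omega
      -- all unit jobs still complete within k
      have hct3unit : ∀ x : Fin (2*k), ct k s3 (Sum.inl x) ≤ k := by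
        intro x
        have hxlt := x.isLt
        by_cases hx : (x:ℕ) < k
        · have hm : s3 (Sum.inl x) = 0 := by rw [hs3u, s0_inl, if_pos hx]
          rw [ct_unit_lo k s3 x (Or.inr (by rw [hs3j, hm]; decide))]
          have hsub : W k s3 (Sum.inl x) ⊆
              ((univ : Finset (Fin (2*k))).filter (fun y : Fin (2*k) => (y:ℕ) < k)) := by
            intro y hy
            rw [W, Finset.mem_filter, hm] at hy
            have h1 := hy.2.1
            rw [hs3u, s0_inl] at h1
            have : (y:ℕ) < k := by
              by_contra hyk
              rw [if_neg hyk] at h1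
              exact absurd h1 (by decide)
            simp [this]
          have := Finset.card_le_card hsub
          rw [card_Lset] at this
          exact this
        · have hm : s3 (Sum.inl x) = 1 := by rw [hs3u, s0_inl, if_neg hx]
          have hπ : πK k (s3 (Sum.inl x)) (Sum.inl x) < k := by
            rw [hm, pi1, pi1K_inl, if_neg hx]
            omega
          rw [ct_unit_lo k s3 x (Or.inl hπ)]
          have hsub : W k s3 (Sum.inl x) ⊆
              ((univ : Finset (Fin (2*k))).filter (fun y : Fin (2*k) => k ≤ (y:ℕ))) := by
            intro y hy
            rw [W, Finset.mem_filter, hm] at hy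
            have h1 := hy.2.1
            rw [hs3u, s0_inl] at h1
            have : ¬ ((y:ℕ) < k) := by
              intro hyk
              rw [if_pos hyk] at h1
              exact absurd h1 (by decide)
            simp; omega
          have := Finset.card_le_card hsub
          rw [card_Hset] at this
          exact this
      have hrank3 : R s3 (jst k) = 2*(k:ℝ) + 1 := by
        apply rank_top
        intro j' hj'
        rw [ctime_eq, ctime_eq, hct3jst]
        cases j' with
        | inr v => exact absurd rfl hj'
        | inl x =>
          have := hct3unit x
          exact_mod_cast by omega
      have hrank0 : R s0 (jst k) = 2*(k:ℝ) + 1 := rank_s0_jst hk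
      have hjst : (Sum.inr u : JJ k) = jst k := rfl
      rcases hB with h | ⟨-, h⟩
      · rw [key, hjst] at h
        rw [hrank3, hrank0] at h
        exact absurd h (lt_irrefl _)
      · rw [key, hjst] at h
        rw [ctime_eq, ctime_eq, hct3jst, ct_s0_jst] at h
        exact absurd h (lt_irrefl _)
    | inl x =>
      have hxlt := x.isLt
      by_cases hx : (x:ℕ) < k
      · -- a low unit deviates to machine 1
        have hm0 : s0 (Sum.inl x) = 0 := by rw [s0_inl, if_pos hx]
        have hi1 : i = 1 := by rw [hi, hm0]; rfl
        subst hi1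
        set s1 := Function.update s0 (Sum.inl x) (1 : Fin 2) with hs1
        have key : ∀ inst : DecidableEq (JJ k),
            @Function.update _ _ inst s0 (Sum.inl x) (1 : Fin 2) = s1 :=
          fun inst => (updc inst _ s0 (Sum.inl x) 1).trans hs1.symm
        have hs1u : ∀ y : Fin (2*k), y ≠ x → s1 (Sum.inl y) = s0 (Sum.inl y) :=
          fun y hy => Function.update_of_ne (by simp [hy]) _ _
        have hs1x : s1 (Sum.inl x) = 1 := Function.update_self _ _ _
        have hs1j : s1 (jst k) = 0 := by
          rw [hs1, Function.update_of_ne (by simp [jst]) _ _, s0_jst]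
        -- after deviating, x completes at time ≥ k+1
        have hct1x : k+1 ≤ ct k s1 (Sum.inl x) := by
          have hsub : insert x ((univ : Finset (Fin (2*k))).filter (fun y : Fin (2*k) => k ≤ (y:ℕ)))
              ⊆ W k s1 (Sum.inl x) := by
            intro y hy
            rcases Finset.mem_insert.mp hy with rfl | hy2
            · simp [W]
            · rw [Finset.mem_filter] at hy2
              have hyk : k ≤ (y:ℕ) := hy2.2
              have hyx : y ≠ x := by intro hEq; rw [hEq] at hyk; omega
              rw [W, Finset.mem_filter, hs1x]
              refine ⟨Finset.mem_univ y, ?_, ?_⟩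
              · rw [hs1u y hyx, s0_inl, if_neg (by omega)]
              · rw [pi1, pi1, pi1K_inl, pi1K_inl, if_neg (by omega), if_pos hx]
                have := y.isLt
                omega
          have hc := Finset.card_le_card hsub
          rw [Finset.card_insert_of_notMem (by simp; omega), card_Hset] at hc
          unfold ct
          omega
        -- every other unit job still completes within k
        have hct1unit : ∀ y : Fin (2*k), y ≠ x → ct k s1 (Sum.inl y) ≤ k := by
          intro y hyx
          have hylt := y.isLt
          by_cases hy : (y:ℕ) < k
          · have hm : s1 (Sum.inl y) = 0 := by rw [hs1u y hyx, s0_inl, if_pos hy]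
            have hπ : πK k (s1 (Sum.inl y)) (Sum.inl y) < k := by
              rw [hm, pi0, pi1K_inl, if_pos hy]; exact hy
            rw [ct_unit_lo k s1 y (Or.inl hπ)]
            have hsub : W k s1 (Sum.inl y) ⊆
                ((univ : Finset (Fin (2*k))).filter (fun z : Fin (2*k) => (z:ℕ) < k)) := by
              intro z hz
              rw [W, Finset.mem_filter, hm] at hz
              have h1 := hz.2.1
              have hzx : z ≠ x := by
                intro hEq
                rw [hEq, hs1x] at h1
                exact absurd h1 (by decide)
              rw [hs1u z hzx, s0_inl] at h1
              have : (z:ℕ) < k := by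
                by_contra hzk
                rw [if_neg hzk] at h1
                exact absurd h1 (by decide)
              simp [this]
            have := Finset.card_le_card hsub
            rw [card_Lset] at this
            exact this
          · have hm : s1 (Sum.inl y) = 1 := by rw [hs1u y hyx, s0_inl, if_neg hy]
            rw [ct_unit_lo k s1 y (Or.inr (by rw [hs1j, hm]; decide))]
            have hsub : W k s1 (Sum.inl y) ⊆
                ((univ : Finset (Fin (2*k))).filter (fun z : Fin (2*k) => k ≤ (z:ℕ))) := by
              intro z hz
              rw [W, Finset.mem_filter, hm] at hz
              obtain ⟨-, h1, h2⟩ := hz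
              have hzx : z ≠ x := by
                rintro rfl
                rw [pi1, pi1, pi1K_inl, pi1K_inl, if_pos hx, if_neg hy] at h2
                omega
              rw [hs1u z hzx, s0_inl] at h1
              have : ¬ ((z:ℕ) < k) := by
                intro hzk
                rw [if_pos hzk] at h1
                exact absurd h1 (by decide)
              simp; omega
            have := Finset.card_le_card hsub
            rw [card_Hset] at this
            exact this
        have hrank1 : 2*(k:ℝ) ≤ R s1 (Sum.inl x) := by
          have h := rank_ge s1 (Sum.inl x) (Finset.image Sum.inl (univ.erase x)) ?_
          · rw [Finset.card_image_of_injective _ Sum.inl_injective,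
              Finset.card_erase_of_mem (Finset.mem_univ _), Finset.card_univ,
              Fintype.card_fin] at h
            have hc : ((2*k-1 : ℕ) : ℝ) + 1 = 2*(k:ℝ) := by
              push_cast [Nat.cast_sub (show 1 ≤ 2*k by omega)]
              ring
            linarith
          · intro j' hj'
            rw [Finset.mem_image] at hj'
            obtain ⟨y, hy, rfl⟩ := hj'
            rw [Finset.mem_erase] at hy
            rw [ctime_eq, ctime_eq]
            have h1 := hct1unit y hy.1
            have h2 := hct1x
            exact_mod_cast by omega
        have hrank0 : R s0 (Sum.inl x) ≤ 2*(k:ℝ) - 1/2 := rank_s0_unit hk x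
        rcases hB with h | ⟨h, -⟩
        · rw [key] at h; linarith
        · rw [key] at h; linarith
      · -- a high unit deviates to machine 0
        have hm1 : s0 (Sum.inl x) = 1 := by rw [s0_inl, if_neg hx]
        have hi0 : i = 0 := by rw [hi, hm1]; rfl
        subst hi0
        set s2 := Function.update s0 (Sum.inl x) (0 : Fin 2) with hs2
        have key : ∀ inst : DecidableEq (JJ k),
            @Function.update _ _ inst s0 (Sum.inl x) (0 : Fin 2) = s2 :=
          fun inst => (updc inst _ s0 (Sum.inl x) 0).trans hs2.symm
        have hs2u : ∀ y : Fin (2*k), y ≠ x → s2 (Sum.inl y) = s0 (Sum.inl y) :=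
          fun y hy => Function.update_of_ne (by simp [hy]) _ _
        have hs2x : s2 (Sum.inl x) = 0 := Function.update_self _ _ _
        have hs2j : s2 (jst k) = 0 := by
          rw [hs2, Function.update_of_ne (by simp [jst]) _ _, s0_jst]
        -- after deviating, x completes at time ≥ 3k+1
        have hct2x : 3*k+1 ≤ ct k s2 (Sum.inl x) := by
          have hπ : k < πK k (s2 (Sum.inl x)) (Sum.inl x) := by
            rw [hs2x, pi0, pi1K_inl, if_neg hx]
            omega
          rw [ct_unit_hi k s2 x hπ (by rw [hs2j, hs2x])]
          have hsub : insert x ((univ : Finset (Fin (2*k))).filter (fun y : Fin (2*k) => (y:ℕ) < k))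
              ⊆ W k s2 (Sum.inl x) := by
            intro y hy
            rcases Finset.mem_insert.mp hy with rfl | hy2
            · simp [W]
            · rw [Finset.mem_filter] at hy2
              have hyk : (y:ℕ) < k := hy2.2
              have hyx : y ≠ x := by intro hEq; rw [hEq] at hyk; omega
              rw [W, Finset.mem_filter, hs2x]
              refine ⟨Finset.mem_univ y, ?_, ?_⟩
              · rw [hs2u y hyx, s0_inl, if_pos hyk]
              · rw [pi0, pi0, pi1K_inl, pi1K_inl, if_pos hyk, if_neg hx]
                omega
          have hc := Finset.card_le_card hsub
          rw [Finset.card_insert_of_notMem (by simp; omega), card_Lset] at hc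
          omega
        -- every other job completes by 3k
        have hct2jst : ct k s2 (jst k) ≤ 3*k := by
          rw [ct_jst]
          have hsub : (univ.filter (fun y : Fin (2*k) =>
              s2 (Sum.inl y) = s2 (jst k) ∧ πK k (s2 (jst k)) (Sum.inl y) < k)) ⊆
              ((univ : Finset (Fin (2*k))).filter (fun y => πK k (s2 (jst k)) (Sum.inl y) < k)) := by
            intro y hy
            rw [Finset.mem_filter] at hy ⊢
            exact ⟨hy.1, hy.2.2⟩
          have := Finset.card_le_card hsub
          have := card_pi_lt (k := k) (s2 (jst k))
          omega
        have hct2unit : ∀ y : Fin (2*k), y ≠ x → ct k s2 (Sum.inl y) ≤ 2*k := by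
          intro y hyx
          have hylt := y.isLt
          by_cases hy : (y:ℕ) < k
          · have hm : s2 (Sum.inl y) = 0 := by rw [hs2u y hyx, s0_inl, if_pos hy]
            have hπ : πK k (s2 (Sum.inl y)) (Sum.inl y) < k := by
              rw [hm, pi0, pi1K_inl, if_pos hy]; exact hy
            rw [ct_unit_lo k s2 y (Or.inl hπ)]
            exact W_card_le k s2 (Sum.inl y)
          · have hm : s2 (Sum.inl y) = 1 := by rw [hs2u y hyx, s0_inl, if_neg hy]
            rw [ct_unit_lo k s2 y (Or.inr (by rw [hs2j, hm]; decide))]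
            exact W_card_le k s2 (Sum.inl y)
        have hrank2 : 2*(k:ℝ) + 1 ≤ R s2 (Sum.inl x) := by
          have h := rank_ge s2 (Sum.inl x) (univ.erase (Sum.inl x)) ?_
          · rw [Finset.card_erase_of_mem (Finset.mem_univ _), card_univ_JJ] at h
            have hc : ((2*k+1-1 : ℕ) : ℝ) + 1 = 2*(k:ℝ) + 1 := by push_cast; ring
            linarith
          · intro j' hj'
            rw [Finset.mem_erase] at hj'
            rw [ctime_eq, ctime_eq]
            have hb : ct k s2 j' ≤ 3*k := by
              cases j' with
              | inr v => exact hct2jst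
              | inl y =>
                have hyx : y ≠ x := fun hEq => hj'.1 (by rw [hEq])
                have := hct2unit y hyx
                omega
            have := hct2x
            exact_mod_cast by omega
        have hrank0 : R s0 (Sum.inl x) ≤ 2*(k:ℝ) - 1/2 := rank_s0_unit hk x
        rcases hB with h | ⟨h, -⟩
        · rw [key] at h; linarith
        · rw [key] at h; linarith

end IP

/-- In this Inversed-Policies instance a NE exists, every NE has makespan `3k`,
and the optimal makespan is `2k`; hence the PoA of Inversed-Policies is at least `3/2`. -/
theorem inversed_policies_PoA_lower (k : ℕ) (hk : 1 ≤ k) :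
    (∃ s : Fin (2 * k) ⊕ Unit → Fin 2, IsNE (pK k) (fun _ => (1:ℝ)) (πK k) s) ∧
    (∀ s : Fin (2 * k) ⊕ Unit → Fin 2, IsNE (pK k) (fun _ => (1:ℝ)) (πK k) s →
      Cmax (pK k) (fun _ => (1:ℝ)) (πK k) s = 3 * (k : ℝ)) ∧
    (∃ t : Fin (2 * k) ⊕ Unit → Fin 2,
      Cmax (pK k) (fun _ => (1:ℝ)) (πK k) t = 2 * (k : ℝ)) ∧
    (∀ t : Fin (2 * k) ⊕ Unit → Fin 2,
      2 * (k : ℝ) ≤ Cmax (pK k) (fun _ => (1:ℝ)) (πK k) t) :=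
  ⟨⟨IP.s0, IP.s0_NE hk⟩, fun s hs => IP.NE_makespan hk s hs,
    (IP.parts34 hk).1, (IP.parts34 hk).2⟩
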